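/- arXiv:1706.10219 — 2 statements merged into one kernel-verified Lean document; each statement's English description precedes it below -/
import Mathlib

section
/- For a continuous function f, the Lanczos derivative f'_{LDI}(x,h) = (3/(2h³)) · ∫_{x−h}^{x+h} (t−x)·f(t) dt converges to f'(x) as h → 0⁺ whenever f is differentiable at x. -/
/-!
Write `f t = f x + f' (t - x) + r t` with `|r t| ≤ c |t - x|` near `x`. The kernel `t - x`
annihilates the constant `f x`, and `∫ (t - x)² = 2h³/3` over `[x - h, x + h]`, so the
normalised integral reproduces the slope `f'` exactly, while the remainder contributes at
most `c · (3/(2h³)) · ∫ (t - x)² = c`.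
-/

open intervalIntegral Filter Set Metric

noncomputable def lanczosDeriv (f : ℝ → ℝ) (x h : ℝ) : ℝ :=
  3 / (2 * h ^ 3) * ∫ t in (x - h)..(x + h), (t - x) * f t

section LanczosDeriv

variable {f g : ℝ → ℝ} {x h : ℝ}

theorem integral_sub_sq_centered (x h : ℝ) :
    ∫ t in (x - h)..(x + h), (t - x) ^ 2 = 2 * h ^ 3 / 3 := by
  rw [integral_comp_sub_right (fun u => u ^ 2) x, integral_pow]
  ring

theorem lanczosDeriv_affine (a b : ℝ) (hh : h ≠ 0) :
    lanczosDeriv (fun t => a + (t - x) * b) x h = b := by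
  have hodd : ∫ t in (x - h)..(x + h), (t - x) = 0 := by
    rw [integral_comp_sub_right (fun u => u) x, integral_id]
    ring
  have hsplit : (fun t => (t - x) * (a + (t - x) * b))
      = fun t => a * (t - x) + b * (t - x) ^ 2 := by
    funext t; ring
  rw [lanczosDeriv, hsplit, integral_add (Continuous.intervalIntegrable (by fun_prop) _ _)
      (Continuous.intervalIntegrable (by fun_prop) _ _),
    integral_const_mul, integral_const_mul, hodd, integral_sub_sq_centered]
  field_simp
  ring

theorem lanczosDeriv_sub (hf : IntervalIntegrable f MeasureTheory.volume (x - h) (x + h))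
    (hg : IntervalIntegrable g MeasureTheory.volume (x - h) (x + h)) :
    lanczosDeriv (fun t => f t - g t) x h = lanczosDeriv f x h - lanczosDeriv g x h := by
  have hc : ContinuousOn (fun t : ℝ => t - x) (uIcc (x - h) (x + h)) := by fun_prop
  simp only [lanczosDeriv, mul_sub]
  rw [integral_sub (hf.continuousOn_mul hc) (hg.continuousOn_mul hc), mul_sub]

theorem abs_lanczosDeriv_le (hh : 0 < h) {c : ℝ}
    (hg : ∀ t ∈ Icc (x - h) (x + h), |g t| ≤ c * |t - x|) :
    |lanczosDeriv g x h| ≤ c := by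
  have hint : |∫ t in (x - h)..(x + h), (t - x) * g t| ≤ c * (2 * h ^ 3 / 3) := by
    rw [← Real.norm_eq_abs, ← integral_sub_sq_centered, ← intervalIntegral.integral_const_mul]
    refine norm_integral_le_of_norm_le (by linarith) (MeasureTheory.ae_of_all _ fun t ht => ?_)
      (Continuous.intervalIntegrable (by fun_prop) _ _)
    calc ‖(t - x) * g t‖ = |t - x| * |g t| := abs_mul _ _
      _ ≤ |t - x| * (c * |t - x|) := by gcongr; exact hg t (Ioc_subset_Icc_self ht)
      _ = c * (t - x) ^ 2 := by rw [← sq_abs (t - x)]; ring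
  have hk : 0 < 3 / (2 * h ^ 3) := by positivity
  rw [lanczosDeriv, abs_mul, abs_of_pos hk]
  calc 3 / (2 * h ^ 3) * |∫ t in (x - h)..(x + h), (t - x) * g t|
      ≤ 3 / (2 * h ^ 3) * (c * (2 * h ^ 3 / 3)) := by gcongr
    _ = c := by field_simp

end LanczosDeriv

theorem lanczos_derivative_tendsto (f : ℝ → ℝ) (x f' : ℝ)
    (hcont : ∃ ε > 0, ContinuousOn f (Set.Ioo (x - ε) (x + ε)))
    (hderiv : HasDerivAt f f' x) :
    Tendsto (fun h : ℝ => (3 / (2 * h ^ 3)) * ∫ t in (x - h)..(x + h), (t - x) * f t)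
      (nhdsWithin 0 (Set.Ioi 0)) (nhds f') := by
  obtain ⟨ε₀, hε₀, hf⟩ := hcont
  show Tendsto (lanczosDeriv f x) _ _
  refine Metric.tendsto_nhds.2 fun ε hε => ?_
  have hrem : ∀ᶠ t in nhds x, |f t - (f x + (t - x) * f')| ≤ ε / 2 * |t - x| := by
    simpa only [Real.norm_eq_abs, smul_eq_mul, sub_sub] using
      (hasDerivAt_iff_isLittleO.1 hderiv).def (half_pos hε)
  have hU := inter_mem hrem (ball_mem_nhds x hε₀)
  filter_upwards [self_mem_nhdsWithin, nhdsWithin_le_nhds (eventually_closedBall_subset hU)]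
    with h (hh : 0 < h) hsub
  rw [Real.closedBall_eq_Icc] at hsub
  have hfi : IntervalIntegrable f MeasureTheory.volume (x - h) (x + h) := by
    refine ContinuousOn.intervalIntegrable (hf.mono ?_)
    rw [uIcc_of_le (by linarith), ← Real.ball_eq_Ioo]
    exact fun t ht => (hsub ht).2
  rw [Real.dist_eq, ← lanczosDeriv_affine (f x) f' hh.ne',
    ← lanczosDeriv_sub hfi (Continuous.intervalIntegrable (by fun_prop) _ _)]
  exact (abs_lanczosDeriv_le hh fun t ht => (hsub ht).1).trans_lt (half_lt_self hε)
end

section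
/- If the step H is a random variable uniformly distributed on [h/2, 3h/2] and f is C³ near x with f''' continuous, then the expectation E[Dc(f,x,H)] differs from f'(x) by (13h²/72)·f'''(x) + o(h²) as h → 0⁺; in particular E[Dc(f,x,H)] → f'(x). -/
/-!
Taylor's formula of order three makes the central difference quotient
`(f (x + s) - f (x - s)) / (2 s)` equal to `f' x + s² f''' x / 6 + o(s²)`, the even-order terms
cancelling. Averaging over `s ∈ [h/2, 3h/2]` integrates the `o(s²)` remainder into `o(h³)`, and
after division by `h` the moment `∫_{h/2}^{3h/2} s² ds = 13 h³ / 12` turns `s² / 6` into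
`13 h² / 72`.
-/

open Filter Asymptotics Set Topology Nat intervalIntegral

theorem ContDiffAt.isLittleO_sub_taylor {E : Type*} [NormedAddCommGroup E] [NormedSpace ℝ E]
    {f : ℝ → E} {x : ℝ} {n : ℕ} (hf : ContDiffAt ℝ n f x) :
    (fun y ↦ f y - ∑ k ∈ Finset.range (n + 1), ((k ! : ℝ)⁻¹ * (y - x) ^ k) •
      iteratedDeriv k f x) =o[𝓝 x] fun y ↦ (y - x) ^ n := by
  obtain ⟨u, hu, hfu⟩ := hf.contDiffOn le_rfl (by simp)
  obtain ⟨ε, hε, hball⟩ := Metric.mem_nhds_iff.mp hu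
  have hx : x ∈ Metric.ball x ε := Metric.mem_ball_self hε
  have h := taylor_isLittleO (convex_ball x ε) hx (hfu.mono hball)
  rw [nhdsWithin_eq_nhds.mpr (Metric.ball_mem_nhds x hε)] at h
  simpa only [taylor_within_apply, iteratedDerivWithin_of_isOpen Metric.isOpen_ball hx] using h

theorem Asymptotics.IsLittleO.intervalIntegral_mul_mul {E : Type*} [NormedAddCommGroup E]
    [NormedSpace ℝ E] {r : ℝ → E} {n : ℕ} (hr : r =o[𝓝[>] 0] fun s ↦ s ^ n) {a b : ℝ}
    (ha : 0 ≤ a) (hb : 0 ≤ b) :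
    (fun h ↦ ∫ s in a * h..b * h, r s) =o[𝓝[>] 0] fun h ↦ h ^ (n + 1) := by
  rw [isLittleO_iff]
  intro c hc
  set B := max a b
  set K := B ^ n * |b - a| + 1
  have hB : 0 ≤ B := le_max_of_le_left ha
  have hK : 0 < K := by positivity
  obtain ⟨δ, hδ, hrδ⟩ :=
    mem_nhdsGT_iff_exists_Ioo_subset.mp (isLittleO_iff.mp hr (div_pos hc hK))
  filter_upwards [Ioo_mem_nhdsGT (div_pos hδ (by positivity : 0 < B + 1))] with h ⟨hh, hhδ⟩
  have hbound : ∀ s ∈ uIoc (a * h) (b * h), ‖r s‖ ≤ c / K * (B * h) ^ n := by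
    rintro s ⟨hs₀, hs₁⟩
    rw [← max_mul_of_nonneg _ _ hh.le] at hs₁
    have hs : 0 < s := lt_of_le_of_lt (by positivity) hs₀
    have hsδ : s < δ := by
      rw [lt_div_iff₀ (by positivity)] at hhδ
      nlinarith
    calc ‖r s‖ ≤ c / K * ‖s ^ n‖ := hrδ ⟨hs, hsδ⟩
      _ ≤ c / K * (B * h) ^ n := by
        rw [norm_pow, Real.norm_of_nonneg hs.le]
        gcongr
  calc ‖∫ s in a * h..b * h, r s‖ ≤ c / K * (B * h) ^ n * |b * h - a * h| :=
        norm_integral_le_of_norm_le_const hbound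
    _ = c * (B ^ n * |b - a| / K) * h ^ (n + 1) := by
        rw [← sub_mul, abs_mul, abs_of_pos hh]; ring
    _ ≤ c * ‖h ^ (n + 1)‖ := by
        rw [norm_pow, Real.norm_of_nonneg hh.le]
        have hr : B ^ n * |b - a| / K ≤ 1 := (div_le_one hK).mpr (by linarith)
        gcongr
        exact mul_le_of_le_one_right hc.le hr

noncomputable def centralDiffQuot (f : ℝ → ℝ) (x s : ℝ) : ℝ :=
  (f (x + s) - f (x - s)) / (2 * s)

theorem ContinuousOn.intervalIntegrable_centralDiffQuot {f : ℝ → ℝ} {x ε a b : ℝ}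
    (hf : ContinuousOn f (Ioo (x - ε) (x + ε))) (ha : 0 < a) (hab : a ≤ b) (hb : b < ε) :
    IntervalIntegrable (centralDiffQuot f x) MeasureTheory.volume a b := by
  have hright : MapsTo (x + ·) (Icc a b) (Ioo (x - ε) (x + ε)) := fun s ⟨h₀, h₁⟩ ↦
    ⟨by linarith, by linarith⟩
  have hleft : MapsTo (x - ·) (Icc a b) (Ioo (x - ε) (x + ε)) := fun s ⟨h₀, h₁⟩ ↦
    ⟨by linarith, by linarith⟩
  refine ContinuousOn.intervalIntegrable_of_Icc hab ?_
  exact ((hf.comp (continuous_const_add x).continuousOn hright).sub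
    (hf.comp (continuous_sub_left x).continuousOn hleft)).div (by fun_prop)
    fun s hs ↦ by simp [(ha.trans_le hs.1).ne']

theorem ContDiffAt.isLittleO_centralDiffQuot_sub {f : ℝ → ℝ} {x : ℝ}
    (hf : ContDiffAt ℝ 3 f x) :
    (fun s ↦ centralDiffQuot f x s - deriv f x - s ^ 2 / 6 * iteratedDeriv 3 f x)
      =o[𝓝[≠] 0] fun s ↦ s ^ 2 := by
  set T := fun y ↦
    f y - ∑ k ∈ Finset.range 4, ((k ! : ℝ)⁻¹ * (y - x) ^ k) • iteratedDeriv k f x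
  have hT : T =o[𝓝 x] fun y ↦ (y - x) ^ 3 := hf.isLittleO_sub_taylor
  have hright : (fun s ↦ T (x + s)) =o[𝓝 0] fun s ↦ s ^ 3 := by
    simpa [Function.comp_def] using
      hT.comp_tendsto ((continuous_const_add x).tendsto' 0 x (add_zero x))
  have hleft : (fun s ↦ T (x - s)) =o[𝓝 0] fun s ↦ s ^ 3 := by
    simpa [Function.comp_def, Odd.neg_pow (by decide : Odd 3)] using
      hT.comp_tendsto ((continuous_sub_left x).tendsto' 0 x (sub_zero x))
  have hodd : ∀ s, T (x + s) - T (x - s) =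
      f (x + s) - f (x - s) - 2 * s * deriv f x - s ^ 3 / 3 * iteratedDeriv 3 f x := by
    intro s
    simp only [T, Finset.sum_range_succ, Finset.sum_range_zero, smul_eq_mul, iteratedDeriv_zero,
      iteratedDeriv_one, factorial]
    ring
  refine IsLittleO.of_const_mul_right (c := (2 : ℝ)⁻¹) <|
    (((hright.sub hleft).mul_isBigO (isBigO_refl (fun s : ℝ ↦ (2 * s)⁻¹) _)).mono
      nhdsWithin_le_nhds).congr' ?_ ?_
  all_goals filter_upwards [self_mem_nhdsWithin] with s (hs : s ≠ 0)
  · rw [hodd, centralDiffQuot]; field_simp; ring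
  · field_simp

theorem integral_sub_sub_sq_div_six_mul {g : ℝ → ℝ} {h : ℝ}
    (hg : IntervalIntegrable g MeasureTheory.volume (h / 2) (3 * h / 2)) (L M : ℝ) :
    ∫ s in h / 2..3 * h / 2, (g s - L - s ^ 2 / 6 * M)
      = (∫ s in h / 2..3 * h / 2, g s) - h * L - 13 * h ^ 3 / 72 * M := by
  have hmoment : ∫ s in h / 2..3 * h / 2, s ^ 2 = 13 / 12 * h ^ 3 := by
    rw [integral_pow]; ring
  rw [integral_sub (hg.sub intervalIntegrable_const)
      ((by fun_prop : Continuous fun s : ℝ ↦ s ^ 2 / 6 * M).intervalIntegrable _ _),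
    integral_sub hg intervalIntegrable_const, integral_const, integral_mul_const, integral_div,
    hmoment, smul_eq_mul]
  ring

theorem uniform_step_expectation_bias (f : ℝ → ℝ) (x : ℝ)
    (hf : ∃ ε > 0, ContDiffOn ℝ 3 f (Set.Ioo (x - ε) (x + ε))) :
    Tendsto (fun h : ℝ =>
        (((1 / h) * ∫ s in (h / 2)..(3 * h / 2), (f (x + s) - f (x - s)) / (2 * s))
          - deriv f x - (13 * h ^ 2 / 72) * iteratedDeriv 3 f x) / h ^ 2)
      (nhdsWithin 0 (Set.Ioi 0)) (nhds 0)
    ∧ Tendsto (fun h : ℝ =>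
        (1 / h) * ∫ s in (h / 2)..(3 * h / 2), (f (x + s) - f (x - s)) / (2 * s))
      (nhdsWithin 0 (Set.Ioi 0)) (nhds (deriv f x)) := by
  obtain ⟨ε, hε, hfε⟩ := hf
  change Tendsto (fun h ↦ (((1 / h) * ∫ s in h / 2..3 * h / 2, centralDiffQuot f x s)
      - deriv f x - 13 * h ^ 2 / 72 * iteratedDeriv 3 f x) / h ^ 2) _ _
    ∧ Tendsto (fun h ↦ (1 / h) * ∫ s in h / 2..3 * h / 2, centralDiffQuot f x s) _ _
  set M := iteratedDeriv 3 f x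
  have hfx : ContDiffAt ℝ 3 f x := hfε.contDiffAt (Ioo_mem_nhds (by linarith) (by linarith))
  have hrem := (hfx.isLittleO_centralDiffQuot_sub.mono (nhdsGT_le_nhdsNE 0))
    |>.intervalIntegral_mul_mul (a := 1 / 2) (b := 3 / 2) (by norm_num) (by norm_num)
  have hbias : (fun h ↦ ((1 / h) * ∫ s in h / 2..3 * h / 2, centralDiffQuot f x s)
      - deriv f x - 13 * h ^ 2 / 72 * M) =o[𝓝[>] 0] fun h ↦ h ^ 2 := by
    refine ((isBigO_refl (fun h : ℝ ↦ 1 / h) _).mul_isLittleO hrem).congr' ?_ ?_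
    · filter_upwards [Ioo_mem_nhdsGT (by positivity : 0 < 2 * ε / 3)] with h ⟨hh, hhε⟩
      rw [show 1 / 2 * h = h / 2 by ring, show 3 / 2 * h = 3 * h / 2 by ring,
        integral_sub_sub_sq_div_six_mul <| hfε.continuousOn.intervalIntegrable_centralDiffQuot
          (by linarith) (by linarith) (by linarith)]
      field_simp
      ring
    · filter_upwards [self_mem_nhdsWithin] with h (hh : 0 < h)
      field_simp
  refine ⟨hbias.tendsto_div_nhds_zero, ?_⟩
  have hsq : Tendsto (fun h : ℝ ↦ h ^ 2) (𝓝[>] 0) (𝓝 0) := by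
    simpa using ((continuous_pow 2).tendsto (0 : ℝ)).mono_left nhdsWithin_le_nhds
  have hcorr : Tendsto (fun h : ℝ ↦ 13 * h ^ 2 / 72 * M) (𝓝[>] 0) (𝓝 0) := by
    simpa using (hsq.const_mul (13 / 72 * M)).congr fun h ↦ by ring
  simpa using ((hbias.trans_tendsto hsq).add hcorr).add_const (deriv f x)
end
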